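/- arXiv:1405.7774 — 3 statements merged into one kernel-verified Lean document; each statement's English description precedes it below -/
import Mathlib

section
/- Let d, C > 0 with dC ≤ 1. Then the function f(y) = d·arccosh(Cy) satisfies f''(y)/(1+f'(y)²) + f'(y)/y ≤ 0 for all y > 1/C, with strict inequality whenever dC < 1; equivalently, the graph of f is a stationary supersolution (and the graph of −f a stationary subsolution) of the rotationally symmetric graphical mean curvature flow equation with n = 2. -/
/-!
Where `Cy > 1` one computes `f' = dC/s` and `f'' = -dC³y/s³` with `s = √((Cy)² − 1)`, and the
rotational mean curvature operator collapses to `dC((dC)² − 1) / (s y (s² + (dC)²))`, whose sign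
is that of `(dC)² − 1`. For `dC = 1` the graph is the catenoid, which is exactly stationary.
-/

/-- The inverse of `cosh` on `[1,∞)`: `arccosh x = log (x + √(x² − 1))` for `x ≥ 1`. -/
noncomputable def arccosh (x : ℝ) : ℝ := Real.log (x + Real.sqrt (x ^ 2 - 1))

open Real Filter Topology

theorem add_sqrt_sq_sub_one_ne_zero {x : ℝ} (hx : 1 < x ^ 2) : x + √(x ^ 2 - 1) ≠ 0 := by
  intro h
  have hs : √(x ^ 2 - 1) ^ 2 = x ^ 2 - 1 := sq_sqrt (by linarith)
  rw [show √(x ^ 2 - 1) = -x by linarith] at hs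
  linarith

theorem hasDerivAt_sqrt_sq_sub_one {x : ℝ} (hx : 1 < x ^ 2) :
    HasDerivAt (fun y => √(y ^ 2 - 1)) (x / √(x ^ 2 - 1)) x := by
  refine ((hasDerivAt_sqrt (by linarith)).comp x
    (by simpa using (hasDerivAt_pow 2 x).sub_const 1)).congr_deriv ?_
  field_simp

/-- Since `Real.log` is `log |·|`, the formula also holds for `x < -1`. -/
theorem hasDerivAt_arccosh {x : ℝ} (hx : 1 < x ^ 2) :
    HasDerivAt arccosh (√(x ^ 2 - 1))⁻¹ x := by
  have hs : 0 < √(x ^ 2 - 1) := sqrt_pos.mpr (by linarith)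
  have hne := add_sqrt_sq_sub_one_ne_zero hx
  have hadd : HasDerivAt (fun y => y + √(y ^ 2 - 1)) (1 + x / √(x ^ 2 - 1)) x :=
    (hasDerivAt_id' x).add (hasDerivAt_sqrt_sq_sub_one hx)
  refine (hadd.log hne).congr_deriv ?_
  field_simp
  ring

theorem hasDerivAt_inv_sqrt_sq_sub_one {x : ℝ} (hx : 1 < x ^ 2) :
    HasDerivAt (fun y => (√(y ^ 2 - 1))⁻¹) (-x / √(x ^ 2 - 1) ^ 3) x := by
  have hs : 0 < √(x ^ 2 - 1) := sqrt_pos.mpr (by linarith)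
  refine ((hasDerivAt_sqrt_sq_sub_one hx).inv hs.ne').congr_deriv ?_
  field_simp

section Profile

variable (d C : ℝ) {y : ℝ}

theorem hasDerivAt_arccosh_profile (hy : 1 < (C * y) ^ 2) :
    HasDerivAt (fun z => d * arccosh (C * z)) (d * C * (√((C * y) ^ 2 - 1))⁻¹) y := by
  refine (((hasDerivAt_arccosh hy).comp y ((hasDerivAt_id y).const_mul C)).const_mul d
    ).congr_deriv ?_
  simp only [mul_one]
  ring

theorem deriv_arccosh_profile_eventuallyEq (hy : 1 < (C * y) ^ 2) :
    deriv (fun z => d * arccosh (C * z)) =ᶠ[𝓝 y] fun z => d * C * (√((C * z) ^ 2 - 1))⁻¹ := by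
  have hopen : IsOpen {z : ℝ | 1 < (C * z) ^ 2} := isOpen_lt continuous_const (by fun_prop)
  filter_upwards [hopen.mem_nhds hy] with z hz
  exact (hasDerivAt_arccosh_profile d C hz).deriv

theorem deriv_deriv_arccosh_profile (hy : 1 < (C * y) ^ 2) :
    deriv (deriv fun z => d * arccosh (C * z)) y = -(d * C ^ 3 * y) / √((C * y) ^ 2 - 1) ^ 3 := by
  rw [(deriv_arccosh_profile_eventuallyEq d C hy).deriv_eq]
  refine (((hasDerivAt_inv_sqrt_sq_sub_one hy).comp y ((hasDerivAt_id y).const_mul C)).const_mul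
    (d * C)).deriv.trans ?_
  simp only [mul_one]
  ring

theorem rotational_mean_curvature_arccosh_profile (hy : 1 < (C * y) ^ 2) :
    deriv (deriv fun z => d * arccosh (C * z)) y /
          (1 + (deriv (fun z => d * arccosh (C * z)) y) ^ 2)
        + deriv (fun z => d * arccosh (C * z)) y / y
      = d * C * ((d * C) ^ 2 - 1) /
          (√((C * y) ^ 2 - 1) * y * (√((C * y) ^ 2 - 1) ^ 2 + (d * C) ^ 2)) := by
  rw [deriv_deriv_arccosh_profile d C hy, (hasDerivAt_arccosh_profile d C hy).deriv]
  have hs : 0 < √((C * y) ^ 2 - 1) := sqrt_pos.mpr (by linarith)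
  have hs2 : √((C * y) ^ 2 - 1) ^ 2 = (C * y) ^ 2 - 1 := sq_sqrt (by linarith)
  have hy0 : y ≠ 0 := by rintro rfl; norm_num at hy
  generalize √((C * y) ^ 2 - 1) = s at hs hs2 ⊢
  have hsum : 0 < s ^ 2 + (d * C) ^ 2 := by positivity
  field_simp
  linear_combination d * C * hs2

end Profile

/-- For `d, C > 0` with `dC ≤ 1`, the function `f(y) = d·arccosh(Cy)` satisfies
`f''/(1 + f'²) + f'/y ≤ 0` for all `y > 1/C`, with strict inequality whenever `dC < 1`:
the graph of `f` is a stationary supersolution of the rotationally symmetric graphical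
mean curvature flow equation with `n = 2`. -/
theorem catenoid_profile_supersolution (d C : ℝ) (hd : 0 < d) (hC : 0 < C)
    (hdC : d * C ≤ 1) :
    ∀ y : ℝ, 1 / C < y →
      deriv (deriv fun z => d * arccosh (C * z)) y /
          (1 + (deriv (fun z => d * arccosh (C * z)) y) ^ 2)
        + deriv (fun z => d * arccosh (C * z)) y / y ≤ 0 ∧
      (d * C < 1 →
        deriv (deriv fun z => d * arccosh (C * z)) y /
            (1 + (deriv (fun z => d * arccosh (C * z)) y) ^ 2)
          + deriv (fun z => d * arccosh (C * z)) y / y < 0) := by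
  intro y hy
  have hCy : 1 < C * y := by rwa [div_lt_iff₀ hC, mul_comm] at hy
  have hy0 : 0 < y := lt_trans (by positivity) hy
  rw [rotational_mean_curvature_arccosh_profile d C (by nlinarith)]
  have hs : 0 < √((C * y) ^ 2 - 1) := sqrt_pos.mpr (by nlinarith)
  have hden : 0 < √((C * y) ^ 2 - 1) * y * (√((C * y) ^ 2 - 1) ^ 2 + (d * C) ^ 2) := by
    positivity
  have hdC0 : 0 < d * C := mul_pos hd hC
  refine ⟨div_nonpos_of_nonpos_of_nonneg ?_ hden.le, fun hlt => div_neg_of_neg_of_pos ?_ hden⟩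
  · exact mul_nonpos_of_nonneg_of_nonpos hdC0.le (by nlinarith)
  · exact mul_neg_of_pos_of_neg hdC0 (by nlinarith)
end

section
/- Let d ≥ 0 and ε ∈ [0,1) with (d,ε) ≠ (0,0), and let C > 0 satisfy C²(1−ε²) > 1. Then there exists y ∈ (1/C, 1) such that d·arccosh(Cy) + ε = √(1−y²); that is, the translated catenoid profile intersects the upper unit semicircle at some radius y ∈ (1/C, 1). -/
/-!
The gap `y ↦ d·arccosh(Cy) + ε − √(1 − y²)` is continuous on `[1/C, 1]`. At `y = 1/C` the
catenoid term vanishes and the gap is `ε − √(1 − 1/C²) < 0`, which is exactly the hypothesis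
`C²(1 − ε²) > 1`; at `y = 1` the semicircle term vanishes and the gap is
`d·arccosh C + ε > 0` since `(d, ε) ≠ (0, 0)`. The intermediate value theorem gives the crossing.
-/

open Set

theorem arccosh_one : arccosh 1 = 0 := by
  simp [arccosh]

theorem arccosh_pos {x : ℝ} (hx : 1 < x) : 0 < arccosh x :=
  Real.log_pos (by linarith [Real.sqrt_nonneg (x ^ 2 - 1)])

theorem continuousOn_arccosh : ContinuousOn arccosh (Ici 1) := by
  refine ContinuousOn.log (by fun_prop) fun x hx => ?_
  have hx : (1 : ℝ) ≤ x := hx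
  linarith [Real.sqrt_nonneg (x ^ 2 - 1)]

theorem exists_mem_Ioo_eq_sqrt_one_sub_sq {g : ℝ → ℝ} {a : ℝ} (ha : a ≤ 1)
    (hg : ContinuousOn g (Icc a 1)) (hga : g a < √(1 - a ^ 2)) (hg1 : 0 < g 1) :
    ∃ y ∈ Ioo a 1, g y = √(1 - y ^ 2) := by
  have hcont : ContinuousOn (fun y => g y - √(1 - y ^ 2)) (Icc a 1) :=
    hg.sub (by fun_prop)
  have hzero : (0 : ℝ) ∈ Ioo (g a - √(1 - a ^ 2)) (g 1 - √(1 - 1 ^ 2)) :=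
    ⟨sub_neg.mpr hga, by simpa using hg1⟩
  obtain ⟨y, hy, hgy⟩ := intermediate_value_Ioo ha hcont hzero
  exact ⟨y, hy, sub_eq_zero.mp hgy⟩

/-- For `d ≥ 0`, `ε ∈ [0,1)` with `(d,ε) ≠ (0,0)`, and `C > 0` with `C²(1−ε²) > 1`, the
translated catenoid profile `y ↦ d·arccosh(Cy) + ε` intersects the upper unit semicircle
at some radius `y ∈ (1/C, 1)`. -/
theorem catenoid_meets_semicircle (d ε C : ℝ) (hd : 0 ≤ d)
    (hε : ε ∈ Set.Ico (0 : ℝ) 1) (hne : ¬(d = 0 ∧ ε = 0)) (hC : 0 < C)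
    (h : 1 < C ^ 2 * (1 - ε ^ 2)) :
    ∃ y ∈ Set.Ioo (1 / C) 1, d * arccosh (C * y) + ε = Real.sqrt (1 - y ^ 2) := by
  obtain ⟨hε0, -⟩ := hε
  have hεsq : ε ^ 2 < 1 - (1 / C) ^ 2 := by
    rw [div_pow, one_pow, lt_sub_comm, div_lt_iff₀ (by positivity)]
    nlinarith
  have hC1 : 1 < C := by nlinarith [sq_nonneg ε]
  have hcont : ContinuousOn (fun y => d * arccosh (C * y) + ε) (Icc (1 / C) 1) := by
    refine (continuousOn_const.mul (continuousOn_arccosh.comp (by fun_prop) ?_)).add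
      continuousOn_const
    intro y hy
    exact (div_le_iff₀' hC).mp hy.1
  refine exists_mem_Ioo_eq_sqrt_one_sub_sq ((div_le_one hC).mpr hC1.le) hcont ?_ ?_
  · rw [mul_one_div_cancel hC.ne', arccosh_one, mul_zero, zero_add]
    exact (Real.lt_sqrt hε0).mpr hεsq
  · rcases hd.lt_or_eq with hd0 | rfl
    · have := arccosh_pos (x := C * 1) (by rwa [mul_one])
      positivity
    · have hε : 0 < ε := hε0.lt_of_ne' fun h0 => hne ⟨rfl, h0⟩
      simpa using hε
end

section
/- Let R > 1, r₀ ∈ (0,1), and let ω₀ : [r₀,R] → ℝ be a smooth function with ω₀(r₀)² + r₀² = 1, ω₀'(r₀) = √(1−r₀²)/r₀, and |ω₀(y)| ≤ 1 for all y ∈ [r₀,R]. Then there exist constants dᵢ > 0, Cᵢ > 0, εᵢ ∈ [0,1) and yᵢ ∈ (0,r₀) for i = 1,2 such that: (i) −d₁·arccosh(C₁y) − ε₁ < ω₀(y) < d₂·arccosh(C₂y) + ε₂ for all y ∈ [r₀,R]; (ii) dᵢ·arccosh(Cᵢyᵢ) + εᵢ = √(1−yᵢ²) for i = 1,2; and (iii)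 0 ≤ (1−dᵢ²)Cᵢ²yᵢ² − Cᵢ²yᵢ⁴ − 1 + yᵢ² for i = 1,2. (That is, catenoidal barriers enclosing ω₀ and meeting the unit circle at angle at most ninety degrees always exist when the initial height is bounded by 1.) -/
lemma log_le_arccosh (x : ℝ) (hx : 0 < x) : Real.log x ≤ arccosh x := by
  unfold arccosh
  exact Real.log_le_log hx (le_add_of_nonneg_right (Real.sqrt_nonneg _))

lemma arccosh_two : arccosh 2 = Real.log (2 + Real.sqrt 3) := by
  norm_num [arccosh]

set_option maxHeartbeats 1000000 in
/-- Catenoidal barriers enclosing the initial profile `ω₀` and meeting the unit circle at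
an angle of at most ninety degrees always exist when the initial height is bounded by `1`:
there are constants `dᵢ > 0`, `Cᵢ > 0`, `εᵢ ∈ [0,1)` and `yᵢ ∈ (0,r₀)`, `i = 1,2`, with
(i) `−d₁·arccosh(C₁y) − ε₁ < ω₀(y) < d₂·arccosh(C₂y) + ε₂` on `[r₀,R]`;
(ii) `dᵢ·arccosh(Cᵢyᵢ) + εᵢ = √(1−yᵢ²)`; and
(iii) `0 ≤ (1−dᵢ²)Cᵢ²yᵢ² − Cᵢ²yᵢ⁴ − 1 + yᵢ²`. -/
theorem exists_catenoid_barriers (R r₀ : ℝ) (hR : 1 < R) (hr₀ : r₀ ∈ Set.Ioo (0 : ℝ) 1)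
    (ω₀ : ℝ → ℝ) (hsmooth : ContDiffOn ℝ (⊤ : ℕ∞) ω₀ (Set.Icc r₀ R))
    (hcontact : ω₀ r₀ ^ 2 + r₀ ^ 2 = 1)
    (hperp : derivWithin ω₀ (Set.Icc r₀ R) r₀ = Real.sqrt (1 - r₀ ^ 2) / r₀)
    (hheight : ∀ y ∈ Set.Icc r₀ R, |ω₀ y| ≤ 1) :
    ∃ d₁ d₂ C₁ C₂ ε₁ ε₂ y₁ y₂ : ℝ,
      0 < d₁ ∧ 0 < d₂ ∧ 0 < C₁ ∧ 0 < C₂ ∧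
      ε₁ ∈ Set.Ico (0 : ℝ) 1 ∧ ε₂ ∈ Set.Ico (0 : ℝ) 1 ∧
      y₁ ∈ Set.Ioo 0 r₀ ∧ y₂ ∈ Set.Ioo 0 r₀ ∧
      (∀ y ∈ Set.Icc r₀ R,
        -d₁ * arccosh (C₁ * y) - ε₁ < ω₀ y ∧ ω₀ y < d₂ * arccosh (C₂ * y) + ε₂) ∧
      d₁ * arccosh (C₁ * y₁) + ε₁ = Real.sqrt (1 - y₁ ^ 2) ∧
      d₂ * arccosh (C₂ * y₂) + ε₂ = Real.sqrt (1 - y₂ ^ 2) ∧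
      0 ≤ (1 - d₁ ^ 2) * C₁ ^ 2 * y₁ ^ 2 - C₁ ^ 2 * y₁ ^ 4 - 1 + y₁ ^ 2 ∧
      0 ≤ (1 - d₂ ^ 2) * C₂ ^ 2 * y₂ ^ 2 - C₂ ^ 2 * y₂ ^ 4 - 1 + y₂ ^ 2 := by
  obtain ⟨hr0, hr1⟩ := hr₀
  obtain ⟨y₀, hy₀def⟩ : ∃ y₀ : ℝ, y₀ = r₀ / 6 := ⟨_, rfl⟩
  obtain ⟨C, hCdef⟩ : ∃ C : ℝ, C = 12 / r₀ := ⟨_, rfl⟩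
  obtain ⟨ε, hεdef⟩ : ∃ ε : ℝ, ε = Real.sqrt (1 - y₀ ^ 2) - (1 / 2) * arccosh 2 := ⟨_, rfl⟩
  have hy₀pos : 0 < y₀ := by rw [hy₀def]; positivity
  have hy₀lt : y₀ < r₀ := by rw [hy₀def]; linarith
  have hy₀sq : y₀ ^ 2 < 1 / 36 := by
    rw [hy₀def]; nlinarith
  have hCpos : 0 < C := by rw [hCdef]; positivity
  have hCy₀ : C * y₀ = 2 := by
    rw [hCdef, hy₀def]; field_simp; ring
  -- √3 < 2
  have hs3 : Real.sqrt 3 < 2 := by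
    nlinarith [Real.sq_sqrt (by norm_num : (3:ℝ) ≥ 0), Real.sqrt_nonneg 3]
  have hs3' : (1:ℝ) ≤ Real.sqrt 3 := by
    nlinarith [Real.sq_sqrt (by norm_num : (3:ℝ) ≥ 0), Real.sqrt_nonneg 3]
  -- bounds on arccosh 2 = log (2 + √3)
  have harc2pos : 0 < arccosh 2 := by
    rw [arccosh_two]
    apply Real.log_pos; linarith
  have harc2ub : arccosh 2 < 1.4 := by
    rw [arccosh_two]
    have h4 : (2:ℝ) + Real.sqrt 3 ≤ 4 := by linarith
    have := Real.log_le_log (by linarith : (0:ℝ) < 2 + Real.sqrt 3) h4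
    have hlog4 : Real.log 4 = 2 * Real.log 2 := by
      rw [show (4:ℝ) = 2 ^ 2 by norm_num, Real.log_pow]; push_cast; ring
    have h2 := Real.log_two_lt_d9
    rw [hlog4] at this
    nlinarith
  -- bounds on √(1 - y₀²)
  have h1y : (35:ℝ)/36 < 1 - y₀ ^ 2 := by linarith
  have h1y' : 1 - y₀ ^ 2 < 1 := by nlinarith
  have hsq_sq : Real.sqrt (1 - y₀ ^ 2) ^ 2 = 1 - y₀ ^ 2 :=
    Real.sq_sqrt (by nlinarith)
  have hsq_nn : 0 ≤ Real.sqrt (1 - y₀ ^ 2) := Real.sqrt_nonneg _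
  have hsq_lb : (35:ℝ)/36 ≤ Real.sqrt (1 - y₀ ^ 2) := by nlinarith
  have hsq_ub : Real.sqrt (1 - y₀ ^ 2) < 1 := by nlinarith
  -- ε ∈ [0,1)
  have hεlb : 0 ≤ ε := by rw [hεdef]; linarith
  have hεub : ε < 1 := by rw [hεdef]; linarith
  -- log 3 > 1
  have hlog3 : 1 < Real.log 3 := by
    have := Real.exp_one_lt_d9
    have h3 : Real.exp 1 < 3 := by linarith
    calc (1:ℝ) = Real.log (Real.exp 1) := (Real.log_exp 1).symm
    _ < Real.log 3 := Real.log_lt_log (Real.exp_pos 1) h3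
  -- log 12 ≥ log 3 + log (2 + √3)
  have hlog12 : Real.log 3 + Real.log (2 + Real.sqrt 3) ≤ Real.log 12 := by
    rw [← Real.log_mul (by norm_num) (by linarith)]
    exact Real.log_le_log (by positivity) (by nlinarith)
  -- the key barrier inequality on [r₀, R]
  have hkey : ∀ y ∈ Set.Icc r₀ R, 1 < (1/2) * arccosh (C * y) + ε := by
    intro y hy
    have hyr : r₀ ≤ y := hy.1
    have hCy : 12 ≤ C * y := by
      rw [hCdef]
      rw [div_mul_eq_mul_div, le_div_iff₀ hr0]
      nlinarith
    have h1 : Real.log 12 ≤ arccosh (C * y) := by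
      calc Real.log 12 ≤ Real.log (C * y) :=
            Real.log_le_log (by norm_num) hCy
      _ ≤ arccosh (C * y) := log_le_arccosh _ (by linarith)
    rw [hεdef, arccosh_two]
    nlinarith
  refine ⟨1/2, 1/2, C, C, ε, ε, y₀, y₀, by norm_num, by norm_num, hCpos, hCpos,
    ⟨hεlb, hεub⟩, ⟨hεlb, hεub⟩, ⟨hy₀pos, hy₀lt⟩, ⟨hy₀pos, hy₀lt⟩, ?_, ?_, ?_, ?_, ?_⟩
  · intro y hy
    have h := hkey y hy
    have habs := hheight y hy
    rw [abs_le] at habs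
    constructor <;> nlinarith
  · rw [hCy₀, hεdef]; ring
  · rw [hCy₀, hεdef]; ring
  · have h2 : C ^ 2 * y₀ ^ 2 = 4 := by nlinarith
    have h4 : C ^ 2 * y₀ ^ 4 = 4 * y₀ ^ 2 := by nlinarith
    nlinarith
  · have h2 : C ^ 2 * y₀ ^ 2 = 4 := by nlinarith
    have h4 : C ^ 2 * y₀ ^ 4 = 4 * y₀ ^ 2 := by nlinarith
    nlinarith
end
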